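/- arXiv:2410.14409 — 3 statements merged into one kernel-verified Lean document; each statement's English description precedes it below -/
import Mathlib

section
/- Let d ≥ 3 be an integer, q ≥ 3 an integer, and t ≥ (q−1)^{2/d} a real with t > 1. Define R(t) = (t^{d+1} + (q−2)t^d − (q−1)t) / ((t^d − t)(t^{d−1} + q − 1)) and R'(t) = (t + q − 1)/(t^{d−1} + q − 1). Then R(t) ≤ R'(t). -/
/-!
Clearing the common factor `t ^ (d - 1) + q - 1`, the claim is `N ≤ (t + q - 1)(t ^ d - t)` for
the numerator `N` of `R`. Expanding, the right side exceeds `N` by exactly `t ^ d - t ^ 2`, which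
is nonnegative since `t > 1` and `d ≥ 2`.
-/

lemma pow_sub_self_pos {t : ℝ} {d : ℕ} (ht : 1 < t) (hd : 2 ≤ d) : 0 < t ^ d - t := by
  have : t ^ 1 < t ^ d := pow_lt_pow_right₀ ht (by omega)
  linarith [pow_one t]

lemma potts_numerator_eq (t q : ℝ) (d : ℕ) :
    t ^ (d + 1) + (q - 2) * t ^ d - (q - 1) * t =
      (t + q - 1) * (t ^ d - t) - (t ^ d - t ^ 2) := by
  ring

lemma potts_ratio_le {t q B : ℝ} {d : ℕ} (ht : 1 < t) (hd : 2 ≤ d) (hB : 0 < B) :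
    (t ^ (d + 1) + (q - 2) * t ^ d - (q - 1) * t) / ((t ^ d - t) * B) ≤ (t + q - 1) / B := by
  have hD := pow_sub_self_pos ht hd
  have hgap : 0 ≤ t ^ d - t ^ 2 := sub_nonneg.2 (pow_le_pow_right₀ ht.le hd)
  calc (t ^ (d + 1) + (q - 2) * t ^ d - (q - 1) * t) / ((t ^ d - t) * B)
      ≤ (t + q - 1) * (t ^ d - t) / ((t ^ d - t) * B) := by
        rw [potts_numerator_eq]
        gcongr
        linarith
    _ = (t + q - 1) / B := by
        rw [mul_comm (t + q - 1), mul_div_mul_left _ _ hD.ne']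

theorem stmt_7_general (d q : ℕ) (hd : 3 ≤ d) (hq : 3 ≤ q) (t : ℝ) (ht1 : 1 < t) :
    (t ^ (d + 1) + ((q : ℝ) - 2) * t ^ d - ((q : ℝ) - 1) * t) /
        ((t ^ d - t) * (t ^ (d - 1) + (q : ℝ) - 1)) ≤
      (t + (q : ℝ) - 1) / (t ^ (d - 1) + (q : ℝ) - 1) := by
  have hq' : (3 : ℝ) ≤ q := by exact_mod_cast hq
  have hB : 0 < t ^ (d - 1) + (q : ℝ) - 1 := by
    have := pow_pos (one_pos.trans ht1) (d - 1)
    linarith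
  exact potts_ratio_le ht1 (by omega) hB

/-- For `t ≥ (q−1)^{2/d}` with `t > 1`, the quantity
`R(t) = (t^{d+1} + (q−2)t^d − (q−1)t)/((t^d − t)(t^{d−1}+q−1))` is at most
`R'(t) = (t + q − 1)/(t^{d−1} + q − 1)`. -/
theorem stmt_7 (d q : ℕ) (hd : 3 ≤ d) (hq : 3 ≤ q) (t : ℝ) (ht1 : 1 < t)
    (htc : ((q : ℝ) - 1) ^ ((2 : ℝ) / (d : ℝ)) ≤ t) :
    (t ^ (d + 1) + ((q : ℝ) - 2) * t ^ d - ((q : ℝ) - 1) * t) /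
        ((t ^ d - t) * (t ^ (d - 1) + (q : ℝ) - 1)) ≤
      (t + (q : ℝ) - 1) / (t ^ (d - 1) + (q : ℝ) - 1) :=
  stmt_7_general d q hd hq t ht1
end

section
/- Let G = (V,E) be a graph, v ∈ V, ℓ ≥ 1 an integer, and F ⊆ E. Let F_v be the edges of F incident to v and G_{v,F} = (V∖{v}, F∖F_v). Suppose every simple path of length ℓ in G starting at v contains at least one vertex of the largest component C₁ of G_{v,F}. Then there exists a wired boundary around v in B_ℓ(v) for F: a set S ⊆ V(B_ℓ(v))∖{v} such that (i) the component C_v of v in G∖S is disjoint from G∖B_ℓ(v), and (ii) in the graph (V∖V(C_v), {e ∈ F : e ∩ V(C_v) = ∅}), all vertices of S lie in the same connected component. -/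
lemma stmt_12_support_map {V : Type*} {G H : SimpleGraph V} (h : G ≤ H) {u v : V}
    (p : G.Walk u v) : (p.mapLe h).support = p.support := by
  simp only [SimpleGraph.Walk.mapLe, SimpleGraph.Walk.support_map]
  exact List.map_id _

/-- If every simple path of length `ℓ` from `v` in `G` meets the largest component `C₁`
of `G_{v,F}` (the graph `F` with `v` deleted), then `F` has a wired boundary around `v`
in `B_ℓ(v)`: a set `S ⊆ V(B_ℓ(v))∖{v}` such that the component `C_v` of `v` in `G∖S`
is contained in the ball, and all vertices of `S` lie in a single component of the graph
on `V∖C_v` with edges of `F` avoiding `C_v`. -/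
theorem stmt_12 {V : Type*} [Fintype V] [DecidableEq V] (G F : SimpleGraph V) (hFG : F ≤ G)
    (v : V) (ℓ : ℕ) (hℓ : 1 ≤ ℓ)
    (Hvf : SimpleGraph V) (hHvf : ∀ x y, Hvf.Adj x y ↔ F.Adj x y ∧ x ≠ v ∧ y ≠ v)
    (C₁ : Hvf.ConnectedComponent) (hvC₁ : v ∉ C₁.supp)
    (hmax : ∀ C : Hvf.ConnectedComponent, v ∉ C.supp → Nat.card C.supp ≤ Nat.card C₁.supp)
    (hpaths : ∀ (u : V) (p : G.Walk v u), p.IsPath → p.length = ℓ →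
      ∃ w ∈ p.support, w ∈ C₁.supp) :
    ∃ S : Set V, S ⊆ {w | G.Reachable v w ∧ G.dist v w ≤ ℓ} \ {v} ∧
      ∀ GS : SimpleGraph V, (∀ x y, GS.Adj x y ↔ G.Adj x y ∧ x ∉ S ∧ y ∉ S) →
        ((∀ w, GS.Reachable v w → G.Reachable v w ∧ G.dist v w ≤ ℓ) ∧
          ∀ H : SimpleGraph V,
            (∀ x y, H.Adj x y ↔ F.Adj x y ∧ ¬ GS.Reachable v x ∧ ¬ GS.Reachable v y) →
            ∀ x ∈ S, ∀ y ∈ S, H.Reachable x y) := by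
  classical
  set S : Set V := C₁.supp ∩ ({w | G.Reachable v w ∧ G.dist v w ≤ ℓ} \ {v}) with hSdef
  refine ⟨S, fun x hx => hx.2, ?_⟩
  intro GS hGS
  have hle : GS ≤ G := fun x y h => ((hGS _ _).1 h).1
  -- vertices on a GS-walk are either the start vertex or not in S
  have hsupp : ∀ {a b : V} (p : GS.Walk a b), ∀ u ∈ p.support, u = a ∨ u ∉ S := by
    intro a b p
    induction p with
    | nil => intro u hu; left; simpa using hu
    | @cons a c b h q ih =>
      intro u hu
      rw [SimpleGraph.Walk.support_cons, List.mem_cons] at hu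
      rcases hu with hu | hu
      · exact Or.inl hu
      · rcases ih u hu with rfl | hu'
        · exact Or.inr ((hGS _ _).1 h).2.2
        · exact Or.inr hu'
  -- every GS-path from v has length at most ℓ
  have key : ∀ n : ℕ, ∀ {w : V} (p : GS.Walk v w), p.IsPath → p.length = n → n ≤ ℓ := by
    intro n
    induction n with
    | zero => intro w p _ _; exact Nat.zero_le _
    | succ n ih =>
      intro w p hp hlen
      by_contra hcon
      -- peel off the last edge of p
      cases hr : p.reverse with
      | nil =>
        have : p.length = 0 := by
          have := congrArg SimpleGraph.Walk.length hr
          simpa using this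
        omega
      | @cons _ c _ h q =>
        -- q : GS.Walk c v, so q.reverse : GS.Walk v c is the prefix of p
        have hq : q.reverse.IsPath := by
          have : p.reverse.IsPath := hp.reverse
          rw [hr] at this
          exact (SimpleGraph.Walk.IsPath.of_cons this).reverse
        have hqlen : q.reverse.length = n := by
          have := congrArg SimpleGraph.Walk.length hr
          simp only [SimpleGraph.Walk.length_reverse, SimpleGraph.Walk.length_cons] at this
          simp only [SimpleGraph.Walk.length_reverse]
          omega
        have hn : n ≤ ℓ := ih q.reverse hq hqlen
        have hnl : n = ℓ := by omega
        -- map the prefix to G; it is a G-path of length exactly ℓ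
        set p' : G.Walk v c := q.reverse.mapLe hle with hp'def
        have hp'path : p'.IsPath := hq.mapLe hle
        have hp'len : p'.length = ℓ := by
          rw [hp'def]
          simpa [SimpleGraph.Walk.mapLe] using hqlen.trans hnl
        obtain ⟨w', hw'supp, hw'C₁⟩ := hpaths c p' hp'path hp'len
        -- w' is in S
        have hw'ne : w' ≠ v := fun h => hvC₁ (h ▸ hw'C₁)
        have hw'dist : G.dist v w' ≤ ℓ :=
          le_trans (le_trans (SimpleGraph.dist_le _)
            (SimpleGraph.Walk.length_takeUntil_le p' hw'supp)) (le_of_eq hp'len)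
        have hw'reach : G.Reachable v w' := ⟨p'.takeUntil w' hw'supp⟩
        have hw'S : w' ∈ S := ⟨hw'C₁, ⟨hw'reach, hw'dist⟩, hw'ne⟩
        -- but w' is on a GS-walk from v, so w' = v or w' ∉ S
        have hw'GS : w' ∈ q.reverse.support := by
          rwa [hp'def, stmt_12_support_map hle] at hw'supp
        rcases hsupp q.reverse w' hw'GS with rfl | hns
        · exact hw'ne rfl
        · exact hns hw'S
  -- part (i): GS-reachable vertices are in the ball
  have reach_ball : ∀ w, GS.Reachable v w → G.Reachable v w ∧ G.dist v w ≤ ℓ := by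
    intro w hw
    obtain ⟨p⟩ := hw
    have hp : (p.toPath : GS.Walk v w).IsPath := p.toPath.2
    have hlen : (p.toPath : GS.Walk v w).length ≤ ℓ :=
      key _ (p.toPath : GS.Walk v w) hp rfl
    refine ⟨⟨(p.toPath : GS.Walk v w).mapLe hle⟩, ?_⟩
    refine le_trans (le_trans (SimpleGraph.dist_le ((p.toPath : GS.Walk v w).mapLe hle)) ?_) hlen
    simp [SimpleGraph.Walk.mapLe]
  refine ⟨reach_ball, ?_⟩
  -- no vertex of C₁ is GS-reachable from v
  have notreach : ∀ u ∈ C₁.supp, ¬ GS.Reachable v u := by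
    intro u hu hr
    have hune : u ≠ v := fun h => hvC₁ (h ▸ hu)
    have huS : u ∈ S := ⟨hu, ⟨(reach_ball u hr).1, (reach_ball u hr).2⟩, hune⟩
    obtain ⟨p⟩ := hr
    rcases hsupp p u p.end_mem_support with rfl | hns
    · exact hune rfl
    · exact hns huS
  intro H hH x hx y hy
  -- x, y ∈ C₁.supp, so Hvf-reachable; transfer the walk to H
  have hxC : x ∈ C₁.supp := hx.1
  have hyC : y ∈ C₁.supp := hy.1
  have hreach : Hvf.Reachable x y := by
    rw [SimpleGraph.ConnectedComponent.mem_supp_iff] at hxC hyC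
    exact SimpleGraph.ConnectedComponent.exact (hxC.trans hyC.symm)
  obtain ⟨p⟩ := hreach
  have build : ∀ {a b : V} (p : Hvf.Walk a b), a ∈ C₁.supp → H.Reachable a b := by
    intro a b p
    induction p with
    | nil => intro _; exact SimpleGraph.Reachable.refl _
    | @cons a c b h q ih =>
      intro ha
      have hc : c ∈ C₁.supp := by
        rw [SimpleGraph.ConnectedComponent.mem_supp_iff] at ha ⊢
        rw [← ha]
        exact SimpleGraph.ConnectedComponent.sound h.symm.reachable
      have hadj : H.Adj a c :=
        (hH _ _).2 ⟨((hHvf _ _).1 h).1, notreach a ha, notreach c hc⟩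
      exact hadj.reachable.trans (ih hc)
  exact build p hx.1
end

section
/- Let q ≥ 2 and let ρ be a symmetric q×q matrix with nonnegative entries whose row sums satisfy Σ_j ρ_{ij} = ν_i for a positive probability vector ν. Fix φ ∈ (0,1], set ν̂₁ = ν₁/φ and ν̂_i = ν_i for i ≥ 2, and define M̂_{ij} = ρ_{ij}/√(ν̂_i ν̂_j). Let A = max_i {1 − (1−√φ)·ρ_{i1}/ν_i}. Then entrywise (M̂·√ν)₁ ≤ √φ·A·√ν₁ and (M̂·√ν)_i ≤ A·√ν_i for all i ≥ 2; in particular M̂√ν ≤ A√ν entrywise. -/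
open Matrix

/-! Dividing by `√ν̂` rescales the `j`-th column of `ρ` by `√ν_j / √ν̂_j`, which is `√φ` for the
dominant class and `1` otherwise. The row sums of `ρ` being `ν`, this gives the exact value
`(M̂√ν)_i = c_i √ν_i (1 − (1−√φ) ρ_{i1}/ν_i)` with `c_1 = √φ` and `c_i = 1` for `i ≥ 2`. The
bracket is at most `A`, and `A ≥ √φ ≥ 0` because `ρ_{i1} ≤ ν_i`. -/

lemma le_one_sub_mul_div {ι : Type*} [Fintype ι] {ρ : Matrix ι ι ℝ} {ν : ι → ℝ}
    (hρnn : ∀ i j, 0 ≤ ρ i j) (hrow : ∀ i, ∑ j, ρ i j = ν i)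
    (hν : ∀ i, 0 < ν i) {s : ℝ} (hs : s ≤ 1) (i k : ι) :
    s ≤ 1 - (1 - s) * ρ i k / ν i := by
  have hρν : ρ i k ≤ ν i :=
    hrow i ▸ Finset.single_le_sum (fun j _ => hρnn i j) (Finset.mem_univ k)
  have : (1 - s) * ρ i k / ν i ≤ 1 - s := by
    rw [div_le_iff₀ (hν i)]
    nlinarith [hρnn i k]
  linarith

namespace HatNormalization

variable {ι : Type*} [DecidableEq ι] (i₀ : ι)

def scaleAt (s : ℝ) (j : ι) : ℝ := if j = i₀ then s else 1

lemma scaleAt_nonneg {s : ℝ} (hs : 0 ≤ s) (j : ι) : 0 ≤ scaleAt i₀ s j := by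
  unfold scaleAt; split_ifs <;> linarith

lemma scaleAt_le_one {s : ℝ} (hs : s ≤ 1) (j : ι) : scaleAt i₀ s j ≤ 1 := by
  unfold scaleAt; split_ifs <;> linarith

variable {ν νh : ι → ℝ} {φ : ℝ}

lemma sqrt_div_sqrt_eq_scaleAt (hν : ∀ i, 0 < ν i) (hφ0 : 0 < φ)
    (hνh : ∀ i, νh i = if i = i₀ then ν i / φ else ν i) (j : ι) :
    √(ν j) / √(νh j) = scaleAt i₀ √φ j := by
  have hνj : √(ν j) ≠ 0 := (Real.sqrt_pos.2 (hν j)).ne'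
  rw [hνh j, scaleAt]
  split_ifs
  · rw [Real.sqrt_div' _ hφ0.le]
    field_simp
  · exact div_self hνj

variable [Fintype ι]

lemma sum_mul_scaleAt (f : ι → ℝ) (s : ℝ) :
    ∑ j, f j * scaleAt i₀ s j = ∑ j, f j - (1 - s) * f i₀ := by
  have hterm : ∀ j, f j * scaleAt i₀ s j = f j - (1 - s) * (if j = i₀ then f j else 0) := by
    intro j
    unfold scaleAt
    split_ifs <;> ring
  simp only [hterm, Finset.sum_sub_distrib, ← Finset.mul_sum, Finset.sum_ite_eq',
    Finset.mem_univ, if_true]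

variable {ρ M : Matrix ι ι ℝ}

lemma mulVec_sqrt_eq (hν : ∀ i, 0 < ν i) (hrow : ∀ i, ∑ j, ρ i j = ν i) (hφ0 : 0 < φ)
    (hνh : ∀ i, νh i = if i = i₀ then ν i / φ else ν i)
    (hM : ∀ i j, M i j = ρ i j / √(νh i * νh j)) (i : ι) :
    (M *ᵥ fun j => √(ν j)) i =
      scaleAt i₀ √φ i * √(ν i) * (1 - (1 - √φ) * ρ i i₀ / ν i) := by
  have hνh_pos : ∀ k, 0 < νh k := fun k => by
    rw [hνh k]; split_ifs
    exacts [div_pos (hν k) hφ0, hν k]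
  have hratio := sqrt_div_sqrt_eq_scaleAt i₀ hν hφ0 hνh
  calc (M *ᵥ fun j => √(ν j)) i = (∑ j, ρ i j * scaleAt i₀ √φ j) / √(νh i) := by
        simp only [mulVec, dotProduct, hM, Real.sqrt_mul (hνh_pos i).le, Finset.sum_div,
          ← hratio]
        refine Finset.sum_congr rfl fun j _ => ?_
        field_simp
    _ = (ν i - (1 - √φ) * ρ i i₀) / √(νh i) := by rw [sum_mul_scaleAt, hrow]
    _ = scaleAt i₀ √φ i * √(ν i) * (1 - (1 - √φ) * ρ i i₀ / ν i) := by
        rw [← hratio i]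
        field_simp
        rw [Real.sq_sqrt (hν i).le, mul_sub, mul_one, mul_div_cancel₀ _ (hν i).ne']

lemma mulVec_sqrt_le (hν : ∀ i, 0 < ν i) (hrow : ∀ i, ∑ j, ρ i j = ν i) (hφ0 : 0 < φ)
    (hνh : ∀ i, νh i = if i = i₀ then ν i / φ else ν i)
    (hM : ∀ i j, M i j = ρ i j / √(νh i * νh j))
    {A : ℝ} (hA : ∀ i, 1 - (1 - √φ) * ρ i i₀ / ν i ≤ A) (i : ι) :
    (M *ᵥ fun j => √(ν j)) i ≤ scaleAt i₀ √φ i * A * √(ν i) := by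
  rw [mulVec_sqrt_eq i₀ hν hrow hφ0 hνh hM, mul_right_comm _ A]
  exact mul_le_mul_of_nonneg_left (hA i)
    (mul_nonneg (scaleAt_nonneg i₀ (Real.sqrt_nonneg φ) i) (Real.sqrt_nonneg _))

end HatNormalization

/-- Let `ρ` be a symmetric nonnegative matrix with row sums `ν`, a positive probability
vector, and `φ ∈ (0,1]`. With `νh₁ = ν₁/φ`, `νh_i = ν_i` for `i ≥ 2`,
`M̂_{ij} = ρ_{ij}/√(νh_i νh_j)` and `A = max_i {1 − (1−√φ)ρ_{i1}/ν_i}`, the entrywise bounds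
`(M̂√ν)₁ ≤ √φ·A·√ν₁` and `(M̂√ν)_i ≤ A·√ν_i` for `i ≥ 2` hold; in particular
`M̂√ν ≤ A√ν` entrywise. -/
theorem stmt_17 {q : ℕ} (hq : 2 ≤ q)
    (ρ : Matrix (Fin q) (Fin q) ℝ) (hρnn : ∀ i j, 0 ≤ ρ i j)
    (ν : Fin q → ℝ) (hν : ∀ i, 0 < ν i)
    (hrow : ∀ i, ∑ j, ρ i j = ν i)
    (φ : ℝ) (hφ0 : 0 < φ) (hφ1 : φ ≤ 1)
    (νh : Fin q → ℝ)
    (hνh : ∀ i, νh i = if i = (⟨0, by omega⟩ : Fin q) then ν i / φ else ν i)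
    (M : Matrix (Fin q) (Fin q) ℝ)
    (hM : ∀ i j, M i j = ρ i j / Real.sqrt (νh i * νh j))
    (A : ℝ)
    (hA : A = Finset.univ.sup' ⟨(⟨0, by omega⟩ : Fin q), Finset.mem_univ _⟩
      (fun i => 1 - (1 - Real.sqrt φ) * ρ i ⟨0, by omega⟩ / ν i)) :
    ((M.mulVec fun j => Real.sqrt (ν j)) ⟨0, by omega⟩ ≤
        Real.sqrt φ * A * Real.sqrt (ν ⟨0, by omega⟩)) ∧
    (∀ i : Fin q, i ≠ (⟨0, by omega⟩ : Fin q) →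
      (M.mulVec fun j => Real.sqrt (ν j)) i ≤ A * Real.sqrt (ν i)) ∧
    (∀ i, (M.mulVec fun j => Real.sqrt (ν j)) i ≤ A * Real.sqrt (ν i)) := by
  set i₀ : Fin q := ⟨0, by omega⟩
  have hsqrtφ : √φ ≤ 1 := Real.sqrt_le_one.2 hφ1
  have hA_ge : ∀ i, 1 - (1 - √φ) * ρ i i₀ / ν i ≤ A := fun i =>
    hA ▸ Finset.le_sup' (fun i => 1 - (1 - √φ) * ρ i i₀ / ν i) (Finset.mem_univ i)
  have hA_nonneg : 0 ≤ A :=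
    (Real.sqrt_nonneg φ).trans ((le_one_sub_mul_div hρnn hrow hν hsqrtφ i₀ i₀).trans (hA_ge i₀))
  have hle := HatNormalization.mulVec_sqrt_le i₀ hν hrow hφ0 hνh hM hA_ge
  refine ⟨?_, fun i hi => ?_, fun i => ?_⟩
  · simpa [HatNormalization.scaleAt] using hle i₀
  · simpa [HatNormalization.scaleAt, hi] using hle i
  · refine (hle i).trans ?_
    rw [mul_assoc]
    exact mul_le_of_le_one_left (by positivity) (HatNormalization.scaleAt_le_one i₀ hsqrtφ i)
end
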